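/- Let K be a number field. Suppose there exist real numbers k₁ > 1, k₂ > 1 and k₃ > 0 such that for every finite set S of nonzero prime ideals of O_K and every u ∈ K ∖ {0,1} with both u and 1 − u S-units, one has h_K(u:1) ≤ k₁·∑_{𝔮 ∈ S} log N(𝔮) + k₂·log d_K + k₃. Then for all a, b, c ∈ K ∖ {0} with a + b = c, one has h_K(a:b:c) ≤ k₁·rad(a:b:c) + k₂·log d_K + k₃ + [K:ℚ]·log 2. (This is the instance of the paper's Theorem that the hypothesis Siegel(U,K) implies the abc conjecture over K, for the curve U = ℙ¹ ∖ {0,1,∞} with the identity as Belyi function.) -/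

import Mathlib

open NumberField IsDedekindDomain

/-- The additive `𝔭`-adic valuation `v_𝔭(x)` of `x ∈ K^×`, extended by `0` at `x = 0`. -/
noncomputable def vIntK (K : Type) [Field K] [NumberField K]
    (v : HeightOneSpectrum (𝓞 K)) (x : K) : ℤ :=
  if h : v.valuation K x = 0 then 0 else -Multiplicative.toAdd (WithZero.unzero h)

/-- `log N(𝔭)`, the logarithm of the absolute norm of the prime ideal `𝔭`. -/
noncomputable def logNormK (K : Type) [Field K] [NumberField K]
    (v : HeightOneSpectrum (𝓞 K)) : ℝ :=
  Real.log (Ideal.absNorm v.asIdeal)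

/-- The relative height `h_K(x₀:x₁:x₂) = ∑_v d_v log max_i |x_i|_v`: the archimedean part is a
sum over the infinite places weighted by the local degrees `mult w`, and at a finite place `𝔭`
one has `d_𝔭 · log max_i |x_i|_𝔭 = (max_i (-v_𝔭(x_i))) · log N(𝔭)`. -/
noncomputable def heightProjK (K : Type) [Field K] [NumberField K] (x₀ x₁ x₂ : K) : ℝ :=
  (∑ w : InfinitePlace K, (w.mult : ℝ) * Real.log (max (w x₀) (max (w x₁) (w x₂))))
    + ∑ᶠ v : HeightOneSpectrum (𝓞 K),
        ((max (-(vIntK K v x₀)) (max (-(vIntK K v x₁)) (-(vIntK K v x₂))) : ℤ) : ℝ)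
          * logNormK K v

/-- The relative height `h_K(u:1) = ∑_v d_v log max (|u|_v, 1)`. -/
noncomputable def height1K (K : Type) [Field K] [NumberField K] (u : K) : ℝ :=
  (∑ w : InfinitePlace K, (w.mult : ℝ) * Real.log (max (w u) 1))
    + ∑ᶠ v : HeightOneSpectrum (𝓞 K), ((max (-(vIntK K v u)) 0 : ℤ) : ℝ) * logNormK K v

/-- The radical `rad(x₀:x₁:x₂) = ∑ log N(𝔭)`, summed over the nonzero prime ideals `𝔭` for
which the set `{v_𝔭(x₀), v_𝔭(x₁), v_𝔭(x₂)}` has at least two elements. -/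
noncomputable def radK (K : Type) [Field K] [NumberField K] (x₀ x₁ x₂ : K) : ℝ :=
  ∑ᶠ v : HeightOneSpectrum (𝓞 K),
    if 2 ≤ ({vIntK K v x₀, vIntK K v x₁, vIntK K v x₂} : Finset ℤ).card
    then logNormK K v else 0

/-- `log d_K`, the logarithm of the absolute value of the discriminant of `K`. -/
noncomputable def logDiscK (K : Type) [Field K] [NumberField K] : ℝ :=
  Real.log |(NumberField.discr K : ℝ)|

/-!
Put `u = a / c`, so that `1 - u = b / c`. By the product formula the height is invariant under
scaling the coordinates, and so is the radical, hence `h(a:b:c) = h(u:1-u:1)` and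
`rad(a:b:c) = rad(u:1-u:1)`. At an archimedean place `max(|u|, |1-u|, 1) ≤ 2 max(|u|, 1)`, and at a
finite place the ultrametric inequality makes the two local terms equal, so
`h(u:1-u:1) ≤ h(u:1) + [K:ℚ] log 2`. Finally `u` and `1 - u` are `S`-units for the set `S` of primes
counted by `rad(u:1-u:1)`, and the Siegel bound for `u` and this `S` is the claim.
-/

lemma Finset.two_le_card_triple_iff {α : Type*} [DecidableEq α] {a b c : α} :
    2 ≤ ({a, b, c} : Finset α).card ↔ ¬(a = c ∧ b = c) := by
  constructor
  · rintro h ⟨rfl, rfl⟩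
    simp at h
  · intro h
    refine Finset.one_lt_card_iff.mpr ?_
    by_cases hac : a = c
    · exact ⟨b, c, by simp, by simp, fun hbc => h ⟨hac, hbc⟩⟩
    · exact ⟨a, c, by simp, by simp, hac⟩

lemma AbsoluteValue.max_one_sub_le_two_mul_max_one {R : Type*} [Ring R] [Nontrivial R]
    (f : AbsoluteValue R ℝ) (u : R) :
    max (f u) (max (f (1 - u)) (f 1)) ≤ 2 * max (f u) 1 := by
  have h1u := f.sub_le_add 1 u
  have hu := f.nonneg u
  rw [f.map_one] at h1u ⊢
  refine max_le ?_ (max_le ?_ ?_) <;> cases max_cases (f u) 1 <;> linarith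

namespace NumberField

variable {K : Type} [Field K] [NumberField K]

lemma adicAbv_eq_zpow_vIntK (v : HeightOneSpectrum (𝓞 K)) {x : K} (hx : x ≠ 0) :
    HeightOneSpectrum.adicAbv K v x = (Ideal.absNorm v.asIdeal : ℝ) ^ (-vIntK K v x) := by
  have hv : v.valuation K x ≠ 0 := (Valuation.ne_zero_iff _).mpr hx
  rw [HeightOneSpectrum.adicAbv_def, WithZeroMulInt.toNNReal_neg_apply _ hv, vIntK, dif_neg hv,
    neg_neg]
  push_cast
  rfl

lemma one_lt_absNorm_real (v : HeightOneSpectrum (𝓞 K)) : (1 : ℝ) < Ideal.absNorm v.asIdeal := by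
  exact_mod_cast HeightOneSpectrum.one_lt_absNorm v

lemma vIntK_mul (v : HeightOneSpectrum (𝓞 K)) {x y : K} (hx : x ≠ 0) (hy : y ≠ 0) :
    vIntK K v (x * y) = vIntK K v x + vIntK K v y := by
  have hN := one_lt_absNorm_real v
  have h := map_mul (HeightOneSpectrum.adicAbv K v) x y
  rw [adicAbv_eq_zpow_vIntK v (mul_ne_zero hx hy), adicAbv_eq_zpow_vIntK v hx,
    adicAbv_eq_zpow_vIntK v hy, ← zpow_add₀ (zero_lt_one.trans hN).ne'] at h
  have := zpow_right_injective₀ (zero_lt_one.trans hN) hN.ne' h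
  omega

lemma vIntK_one (v : HeightOneSpectrum (𝓞 K)) : vIntK K v 1 = 0 := by
  have h := vIntK_mul v (one_ne_zero (α := K)) one_ne_zero
  rw [one_mul] at h
  omega

lemma min_le_vIntK_sub (v : HeightOneSpectrum (𝓞 K)) {x y : K} (hx : x ≠ 0) (hy : y ≠ 0)
    (hxy : x - y ≠ 0) : min (vIntK K v x) (vIntK K v y) ≤ vIntK K v (x - y) := by
  have hN := one_lt_absNorm_real v
  have h := HeightOneSpectrum.adicAbv_add_le_max K v x (-y)
  rw [← sub_eq_add_neg, map_neg_eq_map, adicAbv_eq_zpow_vIntK v hx, adicAbv_eq_zpow_vIntK v hy,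
    adicAbv_eq_zpow_vIntK v hxy, ← (zpow_right_strictMono₀ hN).monotone.map_max,
    zpow_le_zpow_iff_right₀ hN] at h
  omega

lemma hasFiniteSupport_vIntK {x : K} (hx : x ≠ 0) :
    (fun v : HeightOneSpectrum (𝓞 K) => vIntK K v x).HasFiniteSupport := by
  refine ((FinitePlace.hasFiniteMulSupport hx).comp_of_injective
    FinitePlace.equivHeightOneSpectrum.symm.injective).subset fun v hv => ?_
  have hN := one_lt_absNorm_real v
  simp only [Function.mem_mulSupport, Function.comp_apply, ne_eq,
    FinitePlace.equivHeightOneSpectrum_symm_apply, FinitePlace.norm_embedding,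
    adicAbv_eq_zpow_vIntK v hx, zpow_eq_one_iff_right₀ (zero_le_one.trans hN.le) hN.ne',
    neg_eq_zero]
  exact hv

theorem sum_mult_log_eq_finsum_vIntK {x : K} (hx : x ≠ 0) :
    ∑ w : InfinitePlace K, (w.mult : ℝ) * Real.log (w x) =
      ∑ᶠ v, (vIntK K v x : ℝ) * logNormK K v := by
  have h : ∏ w : InfinitePlace K, w x ^ w.mult = (∏ᶠ w : FinitePlace K, w x)⁻¹ := by
    rw [FinitePlace.prod_eq_inv_abs_norm hx, Rat.cast_inv, inv_inv, InfinitePlace.prod_eq_abs_norm]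
  apply_fun Real.log at h
  rw [Real.log_inv, Real.log_prod fun w _ => pow_ne_zero _ (InfinitePlace.pos_iff.mpr hx).ne',
    Real.log_finprod fun w => FinitePlace.pos_iff.mpr hx,
    ← finsum_comp_equiv FinitePlace.equivHeightOneSpectrum.symm, ← finsum_neg_distrib] at h
  simp only [Real.log_pow, FinitePlace.equivHeightOneSpectrum_symm_apply,
    FinitePlace.norm_embedding, adicAbv_eq_zpow_vIntK _ hx, Real.log_zpow] at h
  rw [h]
  simp [logNormK]

theorem heightProjK_mul {t x₀ x₁ x₂ : K} (ht : t ≠ 0) (h₀ : x₀ ≠ 0) (h₁ : x₁ ≠ 0)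
    (h₂ : x₂ ≠ 0) : heightProjK K (t * x₀) (t * x₁) (t * x₂) = heightProjK K x₀ x₁ x₂ := by
  have harch (w : InfinitePlace K) :
      (w.mult : ℝ) * Real.log (max (w (t * x₀)) (max (w (t * x₁)) (w (t * x₂)))) =
        w.mult * Real.log (w t) + w.mult * Real.log (max (w x₀) (max (w x₁) (w x₂))) := by
    have hmax : 0 < max (w x₀) (max (w x₁) (w x₂)) :=
      (InfinitePlace.pos_iff.mpr h₀).trans_le (le_max_left _ _)
    simp only [map_mul, ← mul_max_of_nonneg _ _ (apply_nonneg w t)]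
    rw [Real.log_mul (InfinitePlace.pos_iff.mpr ht).ne' hmax.ne']
    ring
  have hfin (v : HeightOneSpectrum (𝓞 K)) :
      ((max (-vIntK K v (t * x₀)) (max (-vIntK K v (t * x₁)) (-vIntK K v (t * x₂))) : ℤ) : ℝ) *
          logNormK K v =
        -((vIntK K v t : ℝ) * logNormK K v) +
          ((max (-vIntK K v x₀) (max (-vIntK K v x₁) (-vIntK K v x₂)) : ℤ) : ℝ) * logNormK K v := by
    rw [vIntK_mul v ht h₀, vIntK_mul v ht h₁, vIntK_mul v ht h₂,
      show ∀ a b c d : ℤ, max (-(a + b)) (max (-(a + c)) (-(a + d))) =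
        -a + max (-b) (max (-c) (-d)) by omega]
    push_cast
    ring
  have := hasFiniteSupport_vIntK ht
  have := hasFiniteSupport_vIntK h₀
  have := hasFiniteSupport_vIntK h₁
  have := hasFiniteSupport_vIntK h₂
  rw [heightProjK, heightProjK, Finset.sum_congr rfl fun w _ => harch w, Finset.sum_add_distrib,
    finsum_congr hfin, finsum_add_distrib (by fun_prop (disch := simp))
      (by fun_prop (disch := simp)), finsum_neg_distrib, sum_mult_log_eq_finsum_vIntK ht]
  ring

theorem heightProjK_le_height1K {u : K} (hu : u ≠ 0) (hu₁ : 1 - u ≠ 0) :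
    heightProjK K u (1 - u) 1 ≤ height1K K u + Module.finrank ℚ K * Real.log 2 := by
  have harch (w : InfinitePlace K) :
      (w.mult : ℝ) * Real.log (max (w u) (max (w (1 - u)) (w 1))) ≤
        w.mult * Real.log (max (w u) 1) + w.mult * Real.log 2 := by
    rw [← mul_add, ← Real.log_mul (by positivity) two_ne_zero, mul_comm _ (2 : ℝ)]
    gcongr
    · rw [map_one]; positivity
    · exact w.1.max_one_sub_le_two_mul_max_one u
  have hfin (v : HeightOneSpectrum (𝓞 K)) :
      max (-vIntK K v u) (max (-vIntK K v (1 - u)) (-vIntK K v 1)) = max (-vIntK K v u) 0 := by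
    have := min_le_vIntK_sub v one_ne_zero hu hu₁
    rw [vIntK_one] at *
    omega
  have hdeg : ∑ w : InfinitePlace K, (w.mult : ℝ) = Module.finrank ℚ K := by
    exact_mod_cast InfinitePlace.sum_mult_eq
  rw [heightProjK, height1K, finsum_congr fun v => by rw [hfin v], ← hdeg, Finset.sum_mul]
  have := Finset.sum_le_sum fun w (_ : w ∈ Finset.univ) => harch w
  rw [Finset.sum_add_distrib] at this
  linarith

theorem radK_mul {t x₀ x₁ x₂ : K} (ht : t ≠ 0) (h₀ : x₀ ≠ 0) (h₁ : x₁ ≠ 0) (h₂ : x₂ ≠ 0) :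
    radK K (t * x₀) (t * x₁) (t * x₂) = radK K x₀ x₁ x₂ := by
  refine finsum_congr fun v => ?_
  simp only [vIntK_mul v ht h₀, vIntK_mul v ht h₁, vIntK_mul v ht h₂,
    Finset.two_le_card_triple_iff, add_right_inj]

theorem exists_finset_radK_eq_sum {x₀ x₁ x₂ : K} (h₀ : x₀ ≠ 0) (h₁ : x₁ ≠ 0) (h₂ : x₂ ≠ 0) :
    ∃ S : Finset (HeightOneSpectrum (𝓞 K)), radK K x₀ x₁ x₂ = ∑ v ∈ S, logNormK K v ∧
      ∀ v ∉ S, vIntK K v x₀ = vIntK K v x₂ ∧ vIntK K v x₁ = vIntK K v x₂ := by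
  have hfin : {v | ¬(vIntK K v x₀ = vIntK K v x₂ ∧ vIntK K v x₁ = vIntK K v x₂)}.Finite :=
    ((hasFiniteSupport_vIntK h₀).union
      ((hasFiniteSupport_vIntK h₁).union (hasFiniteSupport_vIntK h₂))).subset fun v hv => by
        simp only [Set.mem_ofPred_eq, Set.mem_union, Function.mem_support] at hv ⊢
        omega
  refine ⟨hfin.toFinset, ?_, fun v hv => by simpa using hv⟩
  rw [radK, finsum_eq_sum_of_support_subset _ (s := hfin.toFinset) fun v hv => ?_]
  · exact Finset.sum_congr rfl fun v hv =>
      if_pos (Finset.two_le_card_triple_iff.mpr (by simpa using hv))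
  · contrapose! hv
    simp_all [Finset.two_le_card_triple_iff]

end NumberField

theorem effective_siegel_implies_abc_numberField_general
    (K : Type) [Field K] [NumberField K]
    (k₁ k₂ k₃ : ℝ)
    (hsiegel : ∀ S : Finset (HeightOneSpectrum (𝓞 K)), ∀ u : K, u ≠ 0 → u ≠ 1 →
      (∀ v : HeightOneSpectrum (𝓞 K), v ∉ S → vIntK K v u = 0) →
      (∀ v : HeightOneSpectrum (𝓞 K), v ∉ S → vIntK K v (1 - u) = 0) →
      height1K K u ≤ k₁ * (∑ v ∈ S, logNormK K v) + k₂ * logDiscK K + k₃) :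
    ∀ a b c : K, a ≠ 0 → b ≠ 0 → c ≠ 0 → a + b = c →
      heightProjK K a b c ≤ k₁ * radK K a b c + k₂ * logDiscK K + k₃
        + (Module.finrank ℚ K : ℝ) * Real.log 2 := by
  intro a b c ha hb hc habc
  obtain ⟨u, rfl, rfl⟩ : ∃ u, a = c * u ∧ b = c * (1 - u) :=
    ⟨a / c, by field_simp, by field_simp; linear_combination habc⟩
  have hu : u ≠ 0 := right_ne_zero_of_mul ha
  have hu₁ : 1 - u ≠ 0 := right_ne_zero_of_mul hb
  have hheight := heightProjK_mul hc hu hu₁ one_ne_zero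
  have hrad := radK_mul hc hu hu₁ one_ne_zero
  rw [mul_one] at hheight hrad
  obtain ⟨S, hS, hSunit⟩ := exists_finset_radK_eq_sum hu hu₁ (one_ne_zero (α := K))
  have hsiegel_u := hsiegel S u hu (by rintro rfl; simp at hu₁)
    (fun v hv => by simpa [vIntK_one] using (hSunit v hv).1)
    (fun v hv => by simpa [vIntK_one] using (hSunit v hv).2)
  rw [hheight, hrad, hS]
  linarith [heightProjK_le_height1K hu hu₁]

/-- **The hypothesis Siegel(U,K) for `U = ℙ¹ ∖ {0,1,∞}` implies abc over `K`.**
Suppose there are `k₁ > 1`, `k₂ > 1`, `k₃ > 0` such that for every finite set `S` of nonzero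
prime ideals of `O_K` and every `u ∈ K ∖ {0,1}` with both `u` and `1 - u` `S`-units,
`h_K(u:1) ≤ k₁·∑_{𝔮 ∈ S} log N(𝔮) + k₂·log d_K + k₃`. Then for all nonzero `a, b, c ∈ K` with
`a + b = c`: `h_K(a:b:c) ≤ k₁·rad(a:b:c) + k₂·log d_K + k₃ + [K:ℚ]·log 2`. -/
theorem effective_siegel_implies_abc_numberField
    (K : Type) [Field K] [NumberField K]
    (k₁ k₂ k₃ : ℝ) (hk₁ : 1 < k₁) (hk₂ : 1 < k₂) (hk₃ : 0 < k₃)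
    (hsiegel : ∀ S : Finset (HeightOneSpectrum (𝓞 K)), ∀ u : K, u ≠ 0 → u ≠ 1 →
      (∀ v : HeightOneSpectrum (𝓞 K), v ∉ S → vIntK K v u = 0) →
      (∀ v : HeightOneSpectrum (𝓞 K), v ∉ S → vIntK K v (1 - u) = 0) →
      height1K K u ≤ k₁ * (∑ v ∈ S, logNormK K v) + k₂ * logDiscK K + k₃) :
    ∀ a b c : K, a ≠ 0 → b ≠ 0 → c ≠ 0 → a + b = c →
      heightProjK K a b c ≤ k₁ * radK K a b c + k₂ * logDiscK K + k₃
        + (Module.finrank ℚ K : ℝ) * Real.log 2 :=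
  effective_siegel_implies_abc_numberField_general K k₁ k₂ k₃ hsiegel
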